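/- Let C be a cancellative commutative monoid (a + e = b + e implies a = b), V a vertex set, and E_X, E_Y edge sets with source and target maps s, t : E_X ⊕ E_Y → V; write X ∪ Y for the graph with edges E_X ⊕ E_Y on vertex set V. Then for every 1-cycle c ∈ H₁(X∪Y,C), if C[s](p_X(c)) = C[t](p_X(c)) then also C[s](p_Y(c)) = C[t](p_Y(c)). Consequently the image of ι : H₁(X,C) ⊕ H₁(Y,C) → H₁(X∪Y,C), ι(a,b) = a + b, is exactly the set of c ∈ H₁(X∪Y,C) with C[s](p_X(c)) = C[t](p_X(c)) (and likewise with p_X replaced by p_Y). -/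

import Mathlib

/-!
Since `C[s]` and `C[t]` are additive, a cycle `c = p_X c + p_Y c` gives
`C[s](p_X c) + C[s](p_Y c) = C[t](p_X c) + C[t](p_Y c)`, so by cancellation one of the two
parts is a cycle iff the other is. A decomposition `c = a + b` with `a` supported on `E_X` and
`b` on `E_Y` is necessarily `a = p_X c`, `b = p_Y c`.
-/

/-- The first homology `H₁(G,C)` of a graph `G = (E,V,s,t)` with coefficients in a commutative
monoid `C`: the additive submonoid of 1-cycles in `C₁(G,C) = E →₀ C`, i.e. those `c` with
`C[s](c) = C[t](c)`. -/
noncomputable def graphH1 {E V : Type*} (C : Type*) [AddCommMonoid C] (s t : E → V) :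
    AddSubmonoid (E →₀ C) where
  carrier := {c | Finsupp.mapDomain s c = Finsupp.mapDomain t c}
  add_mem' := by
    intro a b ha hb
    simp only [Set.mem_setOf_eq, Finsupp.mapDomain_add] at *
    rw [ha, hb]
  zero_mem' := by
    simp only [Set.mem_setOf_eq, Finsupp.mapDomain_zero]

/-- The part `p_X(c)` of a 1-chain on the edge set `E_X ⊕ E_Y` supported on `E_X`. -/
noncomputable def projX {EX EY C : Type*} [AddCommMonoid C] (c : (EX ⊕ EY) →₀ C) :
    (EX ⊕ EY) →₀ C :=
  Finsupp.filter (fun e => e.isLeft) c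

/-- The part `p_Y(c)` of a 1-chain on the edge set `E_X ⊕ E_Y` supported on `E_Y`. -/
noncomputable def projY {EX EY C : Type*} [AddCommMonoid C] (c : (EX ⊕ EY) →₀ C) :
    (EX ⊕ EY) →₀ C :=
  Finsupp.filter (fun e => e.isRight) c

/-- `H₁(X,C)` regarded as a submonoid of `C₁(X ∪ Y, C)`: the 1-cycles supported on `E_X`. -/
noncomputable def graphH1X {EX EY V : Type*} (C : Type*) [AddCommMonoid C]
    (s t : EX ⊕ EY → V) : AddSubmonoid ((EX ⊕ EY) →₀ C) where
  carrier := {c | (Finsupp.mapDomain s c = Finsupp.mapDomain t c) ∧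
    ∀ e : EY, c (Sum.inr e) = 0}
  add_mem' := by
    intro a b ha hb
    refine ⟨?_, fun e => ?_⟩
    · simp only [Set.mem_setOf_eq, Finsupp.mapDomain_add] at *
      rw [ha.1, hb.1]
    · simp [Finsupp.add_apply, ha.2 e, hb.2 e]
  zero_mem' := by
    simp [Finsupp.mapDomain_zero]

/-- `H₁(Y,C)` regarded as a submonoid of `C₁(X ∪ Y, C)`: the 1-cycles supported on `E_Y`. -/
noncomputable def graphH1Y {EX EY V : Type*} (C : Type*) [AddCommMonoid C]
    (s t : EX ⊕ EY → V) : AddSubmonoid ((EX ⊕ EY) →₀ C) where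
  carrier := {c | (Finsupp.mapDomain s c = Finsupp.mapDomain t c) ∧
    ∀ e : EX, c (Sum.inl e) = 0}
  add_mem' := by
    intro a b ha hb
    refine ⟨?_, fun e => ?_⟩
    · simp only [Set.mem_setOf_eq, Finsupp.mapDomain_add] at *
      rw [ha.1, hb.1]
    · simp [Finsupp.add_apply, ha.2 e, hb.2 e]
  zero_mem' := by
    simp [Finsupp.mapDomain_zero]

section

variable {C V : Type*} [AddCommMonoid C]

theorem mem_graphH1_iff {E : Type*} {s t : E → V} {c : E →₀ C} :
    c ∈ graphH1 C s t ↔ Finsupp.mapDomain s c = Finsupp.mapDomain t c :=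
  Iff.rfl

theorem add_mem_graphH1_cancel_left [IsLeftCancelAdd C] {E : Type*} {s t : E → V}
    {a b : E →₀ C} (ha : a ∈ graphH1 C s t) : a + b ∈ graphH1 C s t ↔ b ∈ graphH1 C s t := by
  simp only [mem_graphH1_iff, Finsupp.mapDomain_add] at ha ⊢
  rw [ha, add_right_inj]

section Decomposition

variable {EX EY : Type*}

@[simp]
theorem projX_add_projY (c : (EX ⊕ EY) →₀ C) : projX c + projY c = c := by
  ext (e | e) <;> simp [projX, projY, Finsupp.filter_apply]

@[simp]
theorem projX_apply_inr (c : (EX ⊕ EY) →₀ C) (e : EY) : projX c (.inr e) = 0 := by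
  simp [projX]

@[simp]
theorem projY_apply_inl (c : (EX ⊕ EY) →₀ C) (e : EX) : projY c (.inl e) = 0 := by
  simp [projY]

variable {s t : EX ⊕ EY → V} {a b : (EX ⊕ EY) →₀ C}

theorem projX_add_of_mem (ha : a ∈ graphH1X C s t) (hb : b ∈ graphH1Y C s t) :
    projX (a + b) = a := by
  ext (e | e) <;> simp [projX, Finsupp.filter_apply, hb.2, ha.2]

theorem projX_mem_graphH1_iff_projY_mem [IsLeftCancelAdd C] {c : (EX ⊕ EY) →₀ C}
    (hc : c ∈ graphH1 C s t) : projX c ∈ graphH1 C s t ↔ projY c ∈ graphH1 C s t := by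
  rw [← projX_add_projY c] at hc
  refine ⟨fun hX => (add_mem_graphH1_cancel_left hX).1 hc, fun hY => ?_⟩
  rw [add_comm] at hc
  exact (add_mem_graphH1_cancel_left hY).1 hc

theorem projX_mem_graphH1_iff_exists [IsLeftCancelAdd C] {c : (EX ⊕ EY) →₀ C}
    (hc : c ∈ graphH1 C s t) :
    projX c ∈ graphH1 C s t ↔ ∃ a ∈ graphH1X C s t, ∃ b ∈ graphH1Y C s t, c = a + b := by
  constructor
  · intro hX
    have hY := (projX_mem_graphH1_iff_projY_mem hc).1 hX
    exact ⟨projX c, ⟨hX, projX_apply_inr c⟩, projY c, ⟨hY, projY_apply_inl c⟩,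
      (projX_add_projY c).symm⟩
  · rintro ⟨a, ha, b, hb, rfl⟩
    rw [projX_add_of_mem ha hb]
    exact ha.1

end Decomposition

end

/-- Mayer–Vietoris, cancellative case: if `C` is a cancellative commutative
monoid, then for every 1-cycle `c` of `X ∪ Y`, if `p_X(c)` is a 1-cycle then so is `p_Y(c)`;
consequently the image of `ι : H₁(X,C) ⊕ H₁(Y,C) → H₁(X∪Y,C)`, `ι(a,b) = a + b`, is exactly
the set of 1-cycles `c` with `C[s](p_X c) = C[t](p_X c)` — and likewise with `p_Y`. -/
theorem mayer_vietoris_cancellative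
    {C V EX EY : Type*} [AddCommMonoid C]
    (hcancel : ∀ a b e : C, a + e = b + e → a = b)
    (s t : EX ⊕ EY → V) :
    (∀ c ∈ graphH1 C s t,
      Finsupp.mapDomain s (projX c) = Finsupp.mapDomain t (projX c) →
      Finsupp.mapDomain s (projY c) = Finsupp.mapDomain t (projY c)) ∧
    (∀ c ∈ graphH1 C s t,
      (Finsupp.mapDomain s (projX c) = Finsupp.mapDomain t (projX c) ↔
        ∃ a ∈ graphH1X C s t, ∃ b ∈ graphH1Y C s t, c = a + b)) ∧
    (∀ c ∈ graphH1 C s t,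
      (Finsupp.mapDomain s (projY c) = Finsupp.mapDomain t (projY c) ↔
        ∃ a ∈ graphH1X C s t, ∃ b ∈ graphH1Y C s t, c = a + b)) := by
  have : IsLeftCancelAdd C := ⟨fun a b c h => hcancel b c a (by rwa [add_comm b, add_comm c])⟩
  refine ⟨fun c hc => (projX_mem_graphH1_iff_projY_mem hc).1,
    fun c hc => projX_mem_graphH1_iff_exists hc,
    fun c hc => (projX_mem_graphH1_iff_projY_mem hc).symm.trans (projX_mem_graphH1_iff_exists hc)⟩
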